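/- Let u : I → J be a functor between small categories enriched over a complete symmetric monoidal category C, and suppose that for every pair of objects j, j' in J the canonical map of enriched coends ∫^{i∈I} Hom_J(j, u(i)) ⊗ Hom_J(u(i), j') → Hom_J(j, j') induced by composition is an isomorphism. Then for every enriched functor F : J^op × J → C for which the enriched end ∫_{j∈J} F(j,j) exists, the canonical comparison map ∫_{j∈J} F(j,j) → ∫_{i∈I} F(u(i), u(i)) is an isomorphism. -/

import Mathlib

open CategoryTheory Opposite

universe u

variable {I J : Type u} [SmallCategory I] [SmallCategory J]

/-- The relation generating the coend `∫^{i ∈ I} Hom_J(j, u i) × Hom_J(u i, j')`. -/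
def CoendRel (u : I ⥤ J) (j j' : J)
    (x y : Σ i : I, (j ⟶ u.obj i) × (u.obj i ⟶ j')) : Prop :=
  ∃ φ : x.1 ⟶ y.1, y.2.1 = x.2.1 ≫ u.map φ ∧ x.2.2 = u.map φ ≫ y.2.2

/-- The canonical map, induced by composition, from the coend
`∫^{i ∈ I} Hom_J(j, u i) × Hom_J(u i, j')` to `Hom_J(j, j')`. -/
def coendCompMap (u : I ⥤ J) (j j' : J) :
    Quot (CoendRel u j j') → (j ⟶ j') :=
  Quot.lift (fun x => x.2.1 ≫ x.2.2) (by
    rintro x y ⟨φ, h1, h2⟩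
    try simp only []
    rw [h2, ← Category.assoc, ← h1])

/-- The (Type-enriched) end `∫_{j ∈ J} F(j, j)` of `F : Jᵒᵖ × J ⥤ Type`. -/
def EndSet (F : Jᵒᵖ × J ⥤ Type u) : Type u :=
  {x : ∀ j : J, F.obj (op j, j) //
    ∀ {j j' : J} (f : j ⟶ j'),
      F.map ((𝟙 (op j), f) : (op j, j) ⟶ (op j, j')) (x j) =
        F.map ((f.op, 𝟙 j') : (op j', j') ⟶ (op j, j')) (x j')}

/-- The canonical comparison map `∫_{j ∈ J} F(j,j) ⟶ ∫_{i ∈ I} F(u i, u i)`. -/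
def restrictEnd (u : I ⥤ J) (F : Jᵒᵖ × J ⥤ Type u) (x : EndSet F) :
    EndSet (u.op.prod u ⋙ F) := by
  refine ⟨fun i => x.1 (u.obj i), ?_⟩
  intro i i' φ
  have := x.2 (u.map φ)
  simpa [Functor.prod, CategoryStruct.comp] using this

/-!
An element `y` of the end over `I` pairs with the coend `∫^{i} Hom_J(j, u i) × Hom_J(u i, j')`
into `F(j, j')` by `[a, b] ↦ F(a, b)(y i)`. When this coend is `Hom_J(j, j')`, pairing `y` with
the class corresponding to `𝟙 j` gives the component at `j` of an element of the end over `J`;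
its wedge condition, and the two inverse laws, hold because classes of the coend are determined
by their composites. This is the identification `∫_j F(j, j) ≅ Nat(Hom_J, F)` made explicit.
-/

open CategoryTheory.Prod

lemma map_comp_eq_of_wedge {C : Type*} [Category C] (G : Cᵒᵖ × C ⥤ Type*) {j j' : C}
    {xj : G.obj (op j, j)} {xj' : G.obj (op j', j')} (f : j ⟶ j')
    (hx : G.map (𝟙 (op j) ×ₘ f) xj = G.map (f.op ×ₘ 𝟙 j') xj')
    {k k' : C} (a : k ⟶ j) (b : j' ⟶ k') :
    G.map (a.op ×ₘ (f ≫ b)) xj = G.map ((a ≫ f).op ×ₘ b) xj' := by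
  have := congrArg (G.map (a.op ×ₘ b)) hx
  simp only [← Functor.map_comp_apply, prod_comp] at this
  simpa using this

@[ext]
lemma EndSet.ext {F : Jᵒᵖ × J ⥤ Type u} {x y : EndSet F} (h : ∀ j, x.1 j = y.1 j) : x = y :=
  Subtype.ext (funext h)

section CoendComp

variable (u : I ⥤ J) {j j' j'' : J}

def coendPostcomp (f : j' ⟶ j'') : Quot (CoendRel u j j') → Quot (CoendRel u j j'') :=
  Quot.map (fun x => ⟨x.1, x.2.1, x.2.2 ≫ f⟩) (by
    rintro x z ⟨φ, h1, h2⟩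
    exact ⟨φ, h1, by simp [h2]⟩)

def coendPrecomp (f : j ⟶ j') : Quot (CoendRel u j' j'') → Quot (CoendRel u j j'') :=
  Quot.map (fun x => ⟨x.1, f ≫ x.2.1, x.2.2⟩) (by
    rintro x z ⟨φ, h1, h2⟩
    exact ⟨φ, by simp [h1], h2⟩)

lemma coendCompMap_postcomp (f : j' ⟶ j'') (q : Quot (CoendRel u j j')) :
    coendCompMap u j j'' (coendPostcomp u f q) = coendCompMap u j j' q ≫ f := by
  induction q using Quot.ind with
  | _ x => exact (Category.assoc x.2.1 x.2.2 f).symm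

lemma coendCompMap_precomp (f : j ⟶ j') (q : Quot (CoendRel u j' j'')) :
    coendCompMap u j j'' (coendPrecomp u f q) = f ≫ coendCompMap u j' j'' q := by
  induction q using Quot.ind with
  | _ x => exact Category.assoc f x.2.1 x.2.2

end CoendComp

section EndPairing

variable (u : I ⥤ J) (F : Jᵒᵖ × J ⥤ Type u) {j j' j'' : J}

def endPairing (y : EndSet (u.op.prod u ⋙ F)) : Quot (CoendRel u j j') → F.obj (op j, j') :=
  Quot.lift (fun x => F.map (x.2.1.op ×ₘ x.2.2) (y.1 x.1)) (by
    rintro ⟨i, a, b⟩ ⟨i', a', b'⟩ ⟨φ, ha', hb⟩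
    dsimp only at ha' hb
    rw [ha', hb]
    have hy : F.map (𝟙 _ ×ₘ u.map φ) (y.1 i) = F.map ((u.map φ).op ×ₘ 𝟙 _) (y.1 i') := by
      simpa using y.2 φ
    exact map_comp_eq_of_wedge F (u.map φ) hy a b')

lemma map_endPairing_postcomp (y : EndSet (u.op.prod u ⋙ F)) (f : j' ⟶ j'')
    (q : Quot (CoendRel u j j')) :
    F.map (𝟙 (op j) ×ₘ f) (endPairing u F y q) = endPairing u F y (coendPostcomp u f q) := by
  induction q using Quot.ind with
  | _ x => simp [endPairing, coendPostcomp, Quot.map, ← Functor.map_comp_apply]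

lemma map_endPairing_precomp (y : EndSet (u.op.prod u ⋙ F)) (f : j ⟶ j')
    (q : Quot (CoendRel u j' j'')) :
    F.map (f.op ×ₘ 𝟙 j'') (endPairing u F y q) = endPairing u F y (coendPrecomp u f q) := by
  induction q using Quot.ind with
  | _ x => simp [endPairing, coendPrecomp, Quot.map, ← Functor.map_comp_apply]

lemma endPairing_restrictEnd (x : EndSet F) (q : Quot (CoendRel u j j')) :
    endPairing u F (restrictEnd u F x) q = F.map ((coendCompMap u j j' q).op ×ₘ 𝟙 j') (x.1 j') := by
  induction q using Quot.ind with
  | _ x' =>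
    obtain ⟨i, a, b⟩ := x'
    show F.map (a.op ×ₘ b) (x.1 (u.obj i)) = F.map ((a ≫ b).op ×ₘ 𝟙 j') (x.1 j')
    simpa using map_comp_eq_of_wedge F b (x.2 b) a (𝟙 j')

end EndPairing

section EndExtend

variable (u : I ⥤ J) (F : Jᵒᵖ × J ⥤ Type u)
  (h : ∀ j j' : J, Function.Bijective (coendCompMap u j j'))

noncomputable def endExtend (y : EndSet (u.op.prod u ⋙ F)) : EndSet F :=
  ⟨fun j => endPairing u F y (Function.surjInv (h j j).2 (𝟙 j)), by
    intro j j' f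
    rw [map_endPairing_postcomp, map_endPairing_precomp]
    congr 1
    apply (h j j').1
    simp [coendCompMap_postcomp, coendCompMap_precomp, Function.surjInv_eq]⟩

lemma endExtend_restrictEnd (x : EndSet F) : endExtend u F h (restrictEnd u F x) = x := by
  ext j
  simp only [endExtend, endPairing_restrictEnd, Function.surjInv_eq, op_id]
  exact F.map_id_apply _ (x.1 j)

lemma restrictEnd_endExtend (y : EndSet (u.op.prod u ⋙ F)) :
    restrictEnd u F (endExtend u F h y) = y := by
  ext i
  have hunit : Function.surjInv (h (u.obj i) (u.obj i)).2 (𝟙 (u.obj i)) =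
      Quot.mk _ ⟨i, 𝟙 (u.obj i), 𝟙 (u.obj i)⟩ :=
    (h _ _).1 ((Function.surjInv_eq _ _).trans (Category.id_comp _).symm)
  show endPairing u F y _ = y.1 i
  rw [hunit]
  exact F.map_id_apply _ (y.1 i)

noncomputable def endRestrictEquiv : EndSet F ≃ EndSet (u.op.prod u ⋙ F) where
  toFun := restrictEnd u F
  invFun := endExtend u F h
  left_inv := endExtend_restrictEnd u F h
  right_inv := restrictEnd_endExtend u F h

end EndExtend

/-- If `u : I ⥤ J` is such that for all `j, j'` the canonical map of coends
`∫^{i ∈ I} Hom_J(j, u i) × Hom_J(u i, j') → Hom_J(j, j')` induced by composition is an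
isomorphism (a bijection), then for every functor `F : Jᵒᵖ × J ⥤ Type` the canonical
comparison map of ends `∫_{j ∈ J} F(j,j) → ∫_{i ∈ I} F(u i, u i)` is an isomorphism. -/
theorem end_comparison_bijective_of_coend_condition (u : I ⥤ J)
    (h : ∀ j j' : J, Function.Bijective (coendCompMap u j j')) :
    ∀ F : Jᵒᵖ × J ⥤ Type u, Function.Bijective (restrictEnd u F) :=
  fun F => (endRestrictEquiv u F h).bijective
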